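/- arXiv:1503.08855 — 4 statements merged into one kernel-verified Lean document; each statement's English description precedes it below -/
import Mathlib

section
/- Consider the decentralized ADMM iterates over a connected network. If every local cost f_i : ℝ^p → ℝ is convex (hence closed and proper as a real-valued convex function) and the set of minimizers of s ↦ Σ_{i=1}^n f_i(s) is nonempty, then for any penalty parameter c > 0 the primal iterates converge: there exists a minimizer ŝ of s ↦ Σ_{i=1}^n f_i(s) such that for every node i, s_i(k) → ŝ as k → ∞, and the multiplier iterates v_i(k) also converge to a limit (an optimal dual solution). -/
/-!
Stack the node variables into `x : V → E` with the `ℓ²` norm and put `F x = ∑ᵢ fᵢ (xᵢ)`,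
`L = c • (D - A)` and `W = c • (D + A)` (graph Laplacian and signless Laplacian acting blockwise).
With `S k` the stacked primal iterate and `R k = S 1 + ⋯ + S k`, the multiplier is `v k = L (R k)`,
and the optimality condition of the primal update reads `-(L (R (k+1)) + W (S (k+1) - S k)) ∈
∂F (S (k+1))`. As `G` is connected, `ker L` is the consensus subspace, so a minimizer of `∑ᵢ fᵢ`
minimizes `F` on `ker L`, and a Hahn–Banach separation provides a multiplier: a KKT pair `(x, u)`.

For every KKT pair, `⟪L (R k - u), R k - u⟫ + ⟪W (S k - x), S k - x⟫` drops at each step by at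
least `⟪L (S (k+1) - x), S (k+1) - x⟫ + ⟪W (S (k+1) - S k), S (k+1) - S k⟫` (polarization).
Since every node has a neighbour, `L + W = 2cD ≥ 2c`, so the iterates are bounded. A cluster point
is again a KKT pair; its Lyapunov function tends to zero along the subsequence, hence along the
whole sequence, and this forces `S k` and `L (R k)` to converge.
-/

open Filter Topology Set
open scoped RealInnerProductSpace

theorem tendsto_of_norm_sub_sq_le {ι E : Type*} [SeminormedAddCommGroup E] {l : Filter ι}
    {y : ι → E} {a : E} {b : ι → ℝ} (hb : Tendsto b l (𝓝 0)) (h : ∀ k, ‖y k - a‖ ^ 2 ≤ b k) :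
    Tendsto y l (𝓝 a) := by
  rw [tendsto_iff_norm_sub_tendsto_zero]
  have hsqrt : Tendsto (fun k => √(b k)) l (𝓝 0) := by simpa using hb.sqrt
  refine squeeze_zero (fun _ => norm_nonneg _) (fun k => ?_) hsqrt
  simpa using Real.abs_le_sqrt (h k)

theorem isBounded_range_of_norm_sub_sq_le {ι E : Type*} [SeminormedAddCommGroup E]
    {y : ι → E} {a : E} {C : ℝ} (h : ∀ k, ‖y k - a‖ ^ 2 ≤ C) :
    Bornology.IsBounded (range y) := by
  refine (Metric.isBounded_closedBall (x := a) (r := √C)).subset ?_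
  rintro _ ⟨k, rfl⟩
  rw [Metric.mem_closedBall, dist_eq_norm]
  simpa using Real.abs_le_sqrt (h k)

namespace LinearMap
variable {X : Type*} [NormedAddCommGroup X] [InnerProductSpace ℝ X] {T : X →ₗ[ℝ] X}

theorem IsSymmetric.two_mul_inner_sub (hT : T.IsSymmetric) (a b : X) :
    2 * ⟪T a, a - b⟫ = ⟪T a, a⟫ - ⟪T b, b⟫ + ⟪T (a - b), a - b⟫ := by
  have : ⟪T b, a⟫ = ⟪T a, b⟫ := by rw [hT, real_inner_comm]
  simp only [map_sub, inner_sub_left, inner_sub_right]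
  linarith

theorem IsPositive.inner_sq_le (hT : T.IsPositive) (x y : X) :
    ⟪T x, y⟫ ^ 2 ≤ ⟪T x, x⟫ * ⟪T y, y⟫ := by
  have hsymm : ⟪T y, x⟫ = ⟪T x, y⟫ := by rw [hT.isSymmetric, real_inner_comm]
  have key : ∀ t : ℝ, 0 ≤ ⟪T y, y⟫ * (t * t) + 2 * ⟪T x, y⟫ * t + ⟪T x, x⟫ := fun t => by
    have := hT.inner_nonneg_left (x + t • y)
    simp only [map_add, map_smul, inner_add_left, inner_add_right, real_inner_smul_left,
      real_inner_smul_right, hsymm] at this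
    linarith
  have := discrim_le_zero key
  rw [discrim] at this
  nlinarith

theorem IsPositive.map_eq_zero_of_inner_eq_zero (hT : T.IsPositive) {x : X}
    (hx : ⟪T x, x⟫ = 0) : T x = 0 := by
  have := hT.inner_sq_le x (T x)
  rw [hx, zero_mul, real_inner_self_eq_norm_sq] at this
  simpa using this

variable [FiniteDimensional ℝ X]

theorem IsPositive.exists_norm_sq_le (hT : T.IsPositive) :
    ∃ M, 0 ≤ M ∧ ∀ x, ‖T x‖ ^ 2 ≤ M * ⟪T x, x⟫ := by
  refine ⟨‖LinearMap.toContinuousLinearMap T‖, norm_nonneg _, fun x => ?_⟩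
  have hcs := hT.inner_sq_le x (T x)
  have hle : ⟪T (T x), T x⟫ ≤ ‖LinearMap.toContinuousLinearMap T‖ * ‖T x‖ ^ 2 := by
    calc ⟪T (T x), T x⟫ ≤ ‖T (T x)‖ * ‖T x‖ := real_inner_le_norm _ _
      _ ≤ ‖LinearMap.toContinuousLinearMap T‖ * ‖T x‖ * ‖T x‖ := by
        gcongr; exact (LinearMap.toContinuousLinearMap T).le_opNorm (T x)
      _ = _ := by ring
  rw [real_inner_self_eq_norm_sq] at hcs
  rcases (sq_nonneg ‖T x‖).eq_or_lt with h0 | hpos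
  · rw [← h0]; exact mul_nonneg (norm_nonneg _) (hT.inner_nonneg_left x)
  · nlinarith [hT.inner_nonneg_left x]

theorem IsPositive.tendsto_map_of_tendsto_inner {ι : Type*} {l : Filter ι} {y : ι → X}
    (hT : T.IsPositive) (h : Tendsto (fun k => ⟪T (y k), y k⟫) l (𝓝 0)) :
    Tendsto (fun k => T (y k)) l (𝓝 0) := by
  obtain ⟨M, -, hM⟩ := hT.exists_norm_sq_le
  exact tendsto_of_norm_sub_sq_le (by simpa using h.const_mul M) fun k => by simpa using hM (y k)

theorem IsSymmetric.exists_inner_le_norm_sq (hT : T.IsSymmetric) :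
    ∃ C, ∀ x, ⟪T x, x⟫ ≤ C * ‖T x‖ ^ 2 := by
  -- `T` is bounded below on `(ker T)ᗮ`, and `⟪T x, x⟫` only sees the component of `x` there.
  set K := (LinearMap.ker T)ᗮ
  have hinj : LinearMap.ker (T.domRestrict K) = ⊥ := by
    rw [LinearMap.ker_eq_bot']
    intro y hy
    have hmem : (y : X) ∈ LinearMap.ker T ⊓ K := ⟨hy, y.2⟩
    rw [Submodule.inf_orthogonal_eq_bot] at hmem
    exact Subtype.ext hmem
  obtain ⟨C, -, hC⟩ := (T.domRestrict K).exists_antilipschitzWith hinj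
  refine ⟨C, fun x => ?_⟩
  set y : X := x - (LinearMap.ker T).starProjection x
  have hTy : T y = T x := by
    rw [map_sub, (LinearMap.ker T).starProjection_apply_mem x, sub_zero]
  have hy : ‖y‖ ≤ C * ‖T x‖ := by
    simpa [hTy] using ZeroHomClass.bound_of_antilipschitz (T.domRestrict K) hC
      ⟨y, (LinearMap.ker T).sub_starProjection_mem_orthogonal x⟩
  calc ⟪T x, x⟫ = ⟪T x, y⟫ := by rw [hT, ← hTy, ← hT, hTy]
    _ ≤ ‖T x‖ * ‖y‖ := real_inner_le_norm _ _
    _ ≤ ‖T x‖ * (C * ‖T x‖) := by gcongr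
    _ = C * ‖T x‖ ^ 2 := by ring

end LinearMap

theorem ConvexOn.exists_subgradient_vanishing_of_isMinOn {E : Type*} [NormedAddCommGroup E]
    [NormedSpace ℝ E] {F : E → ℝ} (hF : ConvexOn ℝ univ F) (hFc : Continuous F)
    {K : Submodule ℝ E} {x₀ : E} (hx₀ : x₀ ∈ K) (hmin : IsMinOn F K x₀) :
    ∃ ψ : StrongDual ℝ E, (∀ y ∈ K, ψ y = 0) ∧ ∀ x, F x₀ + ψ (x - x₀) ≤ F x := by
  set A : Set (E × ℝ) := {q | F q.1 < q.2}
  have hAconv : Convex ℝ A := by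
    have := (hF.comp_linearMap (LinearMap.fst ℝ E ℝ)).sub
      ((LinearMap.snd ℝ E ℝ).concaveOn convex_univ)
    simpa [A, sub_neg] using this.convex_lt 0
  have hAopen : IsOpen A := isOpen_lt (hFc.comp continuous_fst) continuous_snd
  have hdisj : Disjoint A ((K : Set E) ×ˢ {F x₀}) := by
    rw [Set.disjoint_left]
    rintro ⟨y, t⟩ hA ⟨hy, rfl⟩
    exact (hmin hy).not_gt (show F y < F x₀ from hA)
  obtain ⟨φ, r, hA, hB⟩ :=
    geometric_hahn_banach_open hAconv hAopen (K.convex.prod (convex_singleton _)) hdisj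
  set ψ : StrongDual ℝ E := φ.comp (ContinuousLinearMap.inl ℝ E ℝ)
  set β := φ (0, 1)
  have hφ : ∀ x t, φ (x, t) = ψ x + t * β := fun x t => by
    rw [show ((x, t) : E × ℝ) = (x, 0) + t • (0, 1) by simp, map_add, map_smul]
    simp [ψ, β]
  have hr : ∀ y ∈ K, r ≤ ψ y + F x₀ * β := fun y hy => hφ y _ ▸ hB _ ⟨hy, rfl⟩
  have hβ : β < 0 := by
    have := hA (x₀, F x₀ + 1) (by simp [A])
    rw [hφ] at this
    linarith [hr x₀ hx₀]
  -- `ψ` is bounded below on the subspace `K` by `hr`, hence vanishes there.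
  have hψK : ∀ y ∈ K, ψ y = 0 := by
    intro y hy
    by_contra hne
    have := hr (x₀ + ((r - ψ x₀ - F x₀ * β - 1) / ψ y) • y)
      (K.add_mem hx₀ (K.smul_mem _ hy))
    rw [map_add, map_smul, smul_eq_mul, div_mul_cancel₀ _ hne] at this
    linarith
  refine ⟨(-β)⁻¹ • ψ, fun y hy => by simp [hψK y hy], fun x => ?_⟩
  have hx : ψ x + F x * β ≤ r := by
    refine le_of_tendsto (f := fun t => ψ x + t * β) (x := 𝓝[>] (F x)) ?_ ?_
    · exact ((continuous_const.add (continuous_id.mul continuous_const)).tendsto _).mono_left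
        nhdsWithin_le_nhds
    · filter_upwards [self_mem_nhdsWithin] with t ht
      exact hφ x t ▸ (hA (x, t) ht).le
  have key : ψ x ≤ -β * (F x - F x₀) := by linarith [hr x₀ hx₀, hψK x₀ hx₀]
  rw [smul_apply, map_sub, hψK x₀ hx₀, sub_zero, smul_eq_mul, ← le_sub_iff_add_le',
    inv_mul_le_iff₀ (by linarith)]
  exact key

theorem ConvexOn.le_add_of_isMinOn_add_of_hasLineDerivAt {E : Type*} [AddCommGroup E]
    [Module ℝ E] {φ g : E → ℝ} {a w : E} {g' : ℝ} (hφ : ConvexOn ℝ univ φ)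
    (hmin : IsMinOn (fun y => φ y + g y) univ a) (hg : HasLineDerivAt ℝ g g' a (w - a)) :
    φ a ≤ φ w + g' := by
  suffices φ a - φ w ≤ g' by linarith
  refine ge_of_tendsto hg.tendsto_slope_zero_right ?_
  filter_upwards [Ioo_mem_nhdsGT one_pos] with t ⟨ht₀, ht₁⟩
  have hconv : φ (a + t • (w - a)) ≤ (1 - t) * φ a + t * φ w := by
    have hpt : a + t • (w - a) = (1 - t) • a + t • w := by module
    rw [hpt]
    exact hφ.2 (mem_univ a) (mem_univ w) (by linarith) ht₀.le (by ring)
  have := isMinOn_iff.1 hmin (a + t • (w - a)) (mem_univ _)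
  rw [smul_eq_mul, le_inv_mul_iff₀ ht₀]
  nlinarith

theorem ConvexOn.le_add_inner_of_isMinOn_add_inner_add_sum_norm_sq {E ι : Type*}
    [NormedAddCommGroup E] [InnerProductSpace ℝ E] {φ : E → ℝ} (hφ : ConvexOn ℝ univ φ)
    (s : Finset ι) {c : ℝ} {v a : E} {m : ι → E}
    (hmin : IsMinOn (fun y => φ y + ⟪v, y⟫ + c * ∑ j ∈ s, ‖y - m j‖ ^ 2) univ a) (w : E) :
    φ a ≤ φ w + ⟪v + c • ∑ j ∈ s, (2 : ℝ) • (a - m j), w - a⟫ := by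
  refine hφ.le_add_of_isMinOn_add_of_hasLineDerivAt
    (g := fun y => ⟪v, y⟫ + c * ∑ j ∈ s, ‖y - m j‖ ^ 2)
    (fun y _ => by simpa only [add_assoc] using hmin (mem_univ y)) ?_
  have hline : HasDerivAt (fun t : ℝ => a + t • (w - a)) (w - a) 0 := by
    simpa using ((hasDerivAt_id (0 : ℝ)).smul_const (w - a)).const_add a
  have hsum : HasDerivAt (fun t : ℝ => ∑ j ∈ s, ‖a + t • (w - a) - m j‖ ^ 2)
      (∑ j ∈ s, 2 * ⟪a + (0 : ℝ) • (w - a) - m j, w - a⟫) 0 :=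
    HasDerivAt.fun_sum fun j _ => (hline.sub_const (m j)).norm_sq
  have := ((hasDerivAt_const (0 : ℝ) v).inner ℝ hline).fun_add (hsum.const_mul c)
  simpa [HasLineDerivAt, inner_add_left, sum_inner, real_inner_smul_left, Finset.mul_sum] using this

section PrimalDualIteration

variable {X : Type*} [NormedAddCommGroup X] [InnerProductSpace ℝ X]
  {F : X → ℝ} {L W : X →ₗ[ℝ] X} {S R : ℕ → X} {x u : X}

/-- Primal–dual optimality for minimizing `F` over `ker L`: `-L u` is a subgradient of `F`
at `x`. -/
def IsKKTPair (F : X → ℝ) (L : X →ₗ[ℝ] X) (x u : X) : Prop :=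
  L x = 0 ∧ ∀ w, F x ≤ F w + ⟪L u, w - x⟫

theorem IsKKTPair.isMinOn (hL : L.IsSymmetric) (h : IsKKTPair F L x u) :
    IsMinOn F (LinearMap.ker L) x := fun w hw => by
  have hw : L w = 0 := hw
  simpa [hL u, map_sub, hw, h.1] using h.2 w

theorem exists_isKKTPair [FiniteDimensional ℝ X] (hL : L.IsSymmetric) (hF : ConvexOn ℝ univ F)
    (hx : L x = 0) (hmin : IsMinOn F (LinearMap.ker L) x) : ∃ u, IsKKTPair F L x u := by
  obtain ⟨ψ, hψK, hψ⟩ :=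
    hF.exists_subgradient_vanishing_of_isMinOn hF.locallyLipschitz.continuous hx hmin
  set g := (InnerProductSpace.toDual ℝ X).symm ψ
  have hg : g ∈ LinearMap.range L := by
    rw [← hL.adjoint_eq, ← LinearMap.orthogonal_ker]
    intro y hy
    rw [real_inner_comm, InnerProductSpace.toDual_symm_apply]
    exact hψK y hy
  obtain ⟨u₁, hu₁⟩ := hg
  refine ⟨-u₁, hx, fun w => ?_⟩
  have := hψ w
  rw [map_neg, hu₁, inner_neg_left, ← sub_eq_add_neg, le_sub_iff_add_le]
  simpa [g, InnerProductSpace.toDual_symm_apply] using this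

/-- Decentralized ADMM in stacked form: `L (R k)` is the multiplier, and `S (k + 1)` satisfies the
optimality condition `-(L (R (k + 1)) + W (S (k + 1) - S k)) ∈ ∂F (S (k + 1))`. -/
structure IsPrimalDualIteration (F : X → ℝ) (L W : X →ₗ[ℝ] X) (S R : ℕ → X) : Prop where
  R_succ : ∀ k, R (k + 1) = R k + S (k + 1)
  optimality : ∀ k w, F (S (k + 1)) ≤ F w + ⟪L (R (k + 1)) + W (S (k + 1) - S k), w - S (k + 1)⟫

/-- Squared distance from `(R k, S k)` to `(u, x)` in the seminorm of `L ⊕ W`. -/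
def lyapunov (L W : X →ₗ[ℝ] X) (x u : X) (S R : ℕ → X) (k : ℕ) : ℝ :=
  ⟪L (R k - u), R k - u⟫ + ⟪W (S k - x), S k - x⟫

def dissipation (L W : X →ₗ[ℝ] X) (x : X) (S : ℕ → X) (k : ℕ) : ℝ :=
  ⟪L (S (k + 1) - x), S (k + 1) - x⟫ + ⟪W (S (k + 1) - S k), S (k + 1) - S k⟫

theorem lyapunov_nonneg (hL : L.IsPositive) (hW : W.IsPositive) (k : ℕ) :
    0 ≤ lyapunov L W x u S R k :=
  add_nonneg (hL.inner_nonneg_left _) (hW.inner_nonneg_left _)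

theorem dissipation_nonneg (hL : L.IsPositive) (hW : W.IsPositive) (k : ℕ) :
    0 ≤ dissipation L W x S k :=
  add_nonneg (hL.inner_nonneg_left _) (hW.inner_nonneg_left _)

namespace IsPrimalDualIteration

variable (h : IsPrimalDualIteration F L W S R)
include h

theorem lyapunov_succ_add_dissipation_le (hL : L.IsSymmetric) (hW : W.IsSymmetric)
    (hxu : IsKKTPair F L x u) (k : ℕ) :
    lyapunov L W x u S R (k + 1) + dissipation L W x S k ≤ lyapunov L W x u S R k := by
  have hvar : ⟪L (R (k + 1) - u) + W (S (k + 1) - S k), S (k + 1) - x⟫ ≤ 0 := by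
    have h₁ := h.optimality k x
    have h₂ := hxu.2 (S (k + 1))
    rw [← neg_sub (S (k + 1)) x, inner_neg_right] at h₁
    simp only [map_sub, inner_add_left, inner_sub_left] at h₁ h₂ ⊢
    linarith
  simp only [lyapunov, dissipation]
  set e := R k - u
  set e' := R (k + 1) - u
  set y := S k - x
  set y' := S (k + 1) - x
  have hyy : y' - y = S (k + 1) - S k := by simp [y, y']
  have hLy : L y' = L (e' - e) := by simp [e, e', y', h.R_succ k, hxu.1]
  have hLe : ⟪L e', y'⟫ = ⟪L e', e' - e⟫ := by rw [hL, hLy, ← hL]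
  have hLq : ⟪L (e' - e), e' - e⟫ = ⟪L y', y'⟫ := by
    have : e' - e = y' + x := by simp [e, e', y', h.R_succ k]
    rw [← hLy, this, inner_add_right, hL y' x, hxu.1, inner_zero_right, add_zero]
  have hWy : ⟪W (y' - y), y'⟫ = ⟪W y', y' - y⟫ := by rw [hW, real_inner_comm]
  have hpolL := hL.two_mul_inner_sub e' e
  have hpolW := hW.two_mul_inner_sub y' y
  rw [hyy] at hpolW hWy
  rw [inner_add_left] at hvar
  linarith

theorem lyapunov_antitone (hL : L.IsPositive) (hW : W.IsPositive) (hxu : IsKKTPair F L x u) :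
    Antitone (lyapunov L W x u S R) :=
  antitone_nat_of_succ_le fun k => by
    linarith [h.lyapunov_succ_add_dissipation_le hL.isSymmetric hW.isSymmetric hxu k,
      dissipation_nonneg (x := x) (S := S) hL hW k]

theorem tendsto_dissipation (hL : L.IsPositive) (hW : W.IsPositive) (hxu : IsKKTPair F L x u) :
    Tendsto (dissipation L W x S) atTop (𝓝 0) := by
  have hsum : ∀ K, ∑ k ∈ Finset.range K, dissipation L W x S k + lyapunov L W x u S R K
      ≤ lyapunov L W x u S R 0 := by
    intro K
    induction K with
    | zero => simp
    | succ K ih =>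
      rw [Finset.sum_range_succ]
      linarith [h.lyapunov_succ_add_dissipation_le hL.isSymmetric hW.isSymmetric hxu K]
  refine (summable_of_sum_range_le (c := lyapunov L W x u S R 0)
    (fun k => dissipation_nonneg hL hW k) fun K => ?_).tendsto_atTop_zero
  linarith [hsum K, lyapunov_nonneg (x := x) (u := u) (S := S) (R := R) hL hW K]

theorem norm_sub_sq_le_lyapunov (hL : L.IsPositive) (hW : W.IsPositive) {μ : ℝ}
    (hcoer : ∀ y, μ * ‖y‖ ^ 2 ≤ ⟪L y, y⟫ + ⟪W y, y⟫) (hxu : IsKKTPair F L x u) (k : ℕ) :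
    μ * ‖S (k + 1) - x‖ ^ 2 ≤ lyapunov L W x u S R k := by
  have := h.lyapunov_succ_add_dissipation_le hL.isSymmetric hW.isSymmetric hxu k
  have := hcoer (S (k + 1) - x)
  have := hL.inner_nonneg_left (R (k + 1) - u)
  have := hW.inner_nonneg_left (S (k + 1) - S k)
  simp only [lyapunov, dissipation] at *
  linarith

variable [FiniteDimensional ℝ X]

theorem tendsto_map_succ_sub (hL : L.IsPositive) (hW : W.IsPositive) (hxu : IsKKTPair F L x u) :
    Tendsto (fun k => W (S (k + 1) - S k)) atTop (𝓝 0) :=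
  hW.tendsto_map_of_tendsto_inner <| squeeze_zero (fun _ => hW.inner_nonneg_left _)
    (fun _ => le_add_of_nonneg_left (hL.inner_nonneg_left _)) (h.tendsto_dissipation hL hW hxu)

theorem isBounded_range (hL : L.IsPositive) (hW : W.IsPositive) {μ : ℝ} (hμ : 0 < μ)
    (hcoer : ∀ y, μ * ‖y‖ ^ 2 ≤ ⟪L y, y⟫ + ⟪W y, y⟫) (hxu : IsKKTPair F L x u) :
    Bornology.IsBounded (range fun k => (S (k + 1), L (R (k + 1)))) := by
  obtain ⟨M, hM₀, hM⟩ := hL.exists_norm_sq_le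
  have hle : ∀ k, lyapunov L W x u S R k ≤ lyapunov L W x u S R 0 :=
    fun k => h.lyapunov_antitone hL hW hxu (Nat.zero_le k)
  have hS : Bornology.IsBounded (range fun k => S (k + 1)) :=
    isBounded_range_of_norm_sub_sq_le (a := x) (C := lyapunov L W x u S R 0 / μ) fun k => by
      rw [le_div_iff₀ hμ, mul_comm]
      exact (h.norm_sub_sq_le_lyapunov hL hW hcoer hxu k).trans (hle k)
  have hR : Bornology.IsBounded (range fun k => L (R (k + 1))) :=
    isBounded_range_of_norm_sub_sq_le (a := L u) (C := M * lyapunov L W x u S R 0) fun k => by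
      rw [← map_sub]
      refine (hM _).trans (mul_le_mul_of_nonneg_left ?_ hM₀)
      exact (le_add_of_nonneg_right (hW.inner_nonneg_left _)).trans (hle (k + 1))
  exact (hS.prod hR).subset (range_subset_iff.2 fun k => ⟨mem_range_self k, mem_range_self k⟩)

theorem isKKTPair_of_tendsto (hL : L.IsPositive) (hW : W.IsPositive) (hF : Continuous F)
    (hxu : IsKKTPair F L x u) {φ : ℕ → ℕ} (hφ : StrictMono φ) {x' y' : X}
    (hS : Tendsto (fun m => S (φ m + 1)) atTop (𝓝 x'))
    (hR : Tendsto (fun m => L (R (φ m + 1))) atTop (𝓝 y')) :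
    ∃ u', L u' = y' ∧ IsKKTPair F L x' u' := by
  have hx' : L x' = 0 := by
    have h₁ : Tendsto (fun m => ⟪L (S (φ m + 1) - x), S (φ m + 1) - x⟫) atTop
        (𝓝 ⟪L (x' - x), x' - x⟫) :=
      ((L.continuous_of_finiteDimensional.tendsto _).comp (hS.sub_const x)).inner (hS.sub_const x)
    have h₂ : Tendsto (fun m => ⟪L (S (φ m + 1) - x), S (φ m + 1) - x⟫) atTop (𝓝 0) :=
      squeeze_zero (fun _ => hL.inner_nonneg_left _)
        (fun _ => le_add_of_nonneg_right (hW.inner_nonneg_left _))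
        ((h.tendsto_dissipation hL hW hxu).comp hφ.tendsto_atTop)
    have := hL.map_eq_zero_of_inner_eq_zero (tendsto_nhds_unique h₁ h₂)
    rwa [map_sub, hxu.1, sub_zero] at this
  obtain ⟨u', rfl⟩ : y' ∈ LinearMap.range L :=
    (LinearMap.range L).closed_of_finiteDimensional.mem_of_tendsto hR
      (Eventually.of_forall fun m => LinearMap.mem_range_self L _)
  refine ⟨u', rfl, hx', fun w => ?_⟩
  have hW₀ := (h.tendsto_map_succ_sub hL hW hxu).comp hφ.tendsto_atTop
  refine le_of_tendsto_of_tendsto' ((hF.tendsto x').comp hS) ?_ fun m => h.optimality (φ m) w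
  simpa using tendsto_const_nhds.add ((hR.add hW₀).inner (tendsto_const_nhds.sub hS))

theorem tendsto_lyapunov_zero (hL : L.IsPositive) (hW : W.IsPositive) (hxu : IsKKTPair F L x u)
    {φ : ℕ → ℕ} (hφ : StrictMono φ) (hS : Tendsto (fun m => S (φ m + 1)) atTop (𝓝 x))
    (hR : Tendsto (fun m => L (R (φ m + 1))) atTop (𝓝 (L u))) :
    Tendsto (lyapunov L W x u S R) atTop (𝓝 0) := by
  have hlim := tendsto_atTop_ciInf (h.lyapunov_antitone hL hW hxu)
    ⟨0, forall_mem_range.2 fun k => lyapunov_nonneg hL hW k⟩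
  have hLpart : Tendsto (fun m => ⟪L (R (φ m + 1) - u), R (φ m + 1) - u⟫) atTop (𝓝 0) := by
    obtain ⟨C, hC⟩ := hL.isSymmetric.exists_inner_le_norm_sq
    have hR₀ : Tendsto (fun m => L (R (φ m + 1) - u)) atTop (𝓝 0) := by
      simpa [map_sub] using hR.sub_const (L u)
    refine squeeze_zero (fun _ => hL.inner_nonneg_left _) (fun _ => hC _) ?_
    simpa using (hR₀.norm.pow 2).const_mul C
  have hWpart : Tendsto (fun m => ⟪W (S (φ m + 1) - x), S (φ m + 1) - x⟫) atTop (𝓝 0) := by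
    have hS₀ : Tendsto (fun m => S (φ m + 1) - x) atTop (𝓝 0) := by
      simpa using hS.sub_const x
    simpa using ((W.continuous_of_finiteDimensional.tendsto 0).comp hS₀).inner (𝕜 := ℝ) hS₀
  have hsub : Tendsto (fun m => lyapunov L W x u S R (φ m + 1)) atTop (𝓝 0) := by
    have := hLpart.add hWpart
    rw [add_zero] at this
    exact this
  have hinf : ⨅ k, lyapunov L W x u S R k = 0 :=
    tendsto_nhds_unique (hlim.comp ((tendsto_add_atTop_nat 1).comp hφ.tendsto_atTop)) hsub
  rwa [hinf] at hlim

theorem tendsto_of_tendsto_lyapunov (hL : L.IsPositive) (hW : W.IsPositive) {μ : ℝ} (hμ : 0 < μ)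
    (hcoer : ∀ y, μ * ‖y‖ ^ 2 ≤ ⟪L y, y⟫ + ⟪W y, y⟫) (hxu : IsKKTPair F L x u)
    (hlim : Tendsto (lyapunov L W x u S R) atTop (𝓝 0)) :
    Tendsto S atTop (𝓝 x) ∧ Tendsto (fun k => L (R k)) atTop (𝓝 (L u)) := by
  constructor
  · rw [← tendsto_add_atTop_iff_nat 1]
    refine tendsto_of_norm_sub_sq_le (by simpa using hlim.div_const μ) fun k => ?_
    rw [le_div_iff₀ hμ, mul_comm]
    exact h.norm_sub_sq_le_lyapunov hL hW hcoer hxu k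
  · have : Tendsto (fun k => L (R k - u)) atTop (𝓝 0) :=
      hL.tendsto_map_of_tendsto_inner <| squeeze_zero (fun _ => hL.inner_nonneg_left _)
        (fun _ => le_add_of_nonneg_right (hW.inner_nonneg_left _)) hlim
    simpa [map_sub] using this.add_const (L u)

theorem exists_isKKTPair_tendsto (hL : L.IsPositive) (hW : W.IsPositive) {μ : ℝ} (hμ : 0 < μ)
    (hcoer : ∀ y, μ * ‖y‖ ^ 2 ≤ ⟪L y, y⟫ + ⟪W y, y⟫) (hF : ConvexOn ℝ univ F)
    (hmin : ∃ x₀, L x₀ = 0 ∧ IsMinOn F (LinearMap.ker L) x₀) :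
    ∃ x' u', IsKKTPair F L x' u' ∧ Tendsto S atTop (𝓝 x') ∧
      Tendsto (fun k => L (R k)) atTop (𝓝 (L u')) := by
  obtain ⟨x₀, hx₀, hmin⟩ := hmin
  obtain ⟨u₀, hxu₀⟩ := exists_isKKTPair hL.isSymmetric hF hx₀ hmin
  obtain ⟨⟨x', y'⟩, -, φ, hφ, hlim⟩ :=
    tendsto_subseq_of_bounded (h.isBounded_range hL hW hμ hcoer hxu₀) fun k => mem_range_self k
  have hS := (continuous_fst.tendsto _).comp hlim
  have hR := (continuous_snd.tendsto _).comp hlim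
  obtain ⟨u', rfl, hxu'⟩ :=
    h.isKKTPair_of_tendsto hL hW hF.locallyLipschitz.continuous hxu₀ hφ hS hR
  exact ⟨x', u', hxu', h.tendsto_of_tendsto_lyapunov hL hW hμ hcoer hxu'
    (h.tendsto_lyapunov_zero hL hW hxu' hφ hS hR)⟩

end IsPrimalDualIteration

end PrimalDualIteration

namespace SimpleGraph

variable {V : Type*} [Fintype V] (G : SimpleGraph V) [DecidableRel G.Adj]
  (E : Type*) [NormedAddCommGroup E] [InnerProductSpace ℝ E]

theorem sum_sum_neighborFinset_comm {M : Type*} [AddCommMonoid M] (h : V → V → M) :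
    ∑ i, ∑ j ∈ G.neighborFinset i, h i j = ∑ i, ∑ j ∈ G.neighborFinset i, h j i := by
  simp_rw [neighborFinset_eq_filter, Finset.sum_filter]
  rw [Finset.sum_comm]
  simp_rw [G.adj_comm]

def lapOp : (PiLp 2 fun _ : V => E) →ₗ[ℝ] PiLp 2 fun _ : V => E where
  toFun x := WithLp.toLp 2 fun i => ∑ j ∈ G.neighborFinset i, (x i - x j)
  map_add' x y := by
    ext i
    simp only [PiLp.add_apply, ← Finset.sum_add_distrib]
    exact Finset.sum_congr rfl fun _ _ => add_sub_add_comm _ _ _ _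
  map_smul' c x := by
    ext i
    simp only [PiLp.smul_apply, ← smul_sub, ← Finset.smul_sum, RingHom.id_apply]

def signlessLapOp : (PiLp 2 fun _ : V => E) →ₗ[ℝ] PiLp 2 fun _ : V => E where
  toFun x := WithLp.toLp 2 fun i => ∑ j ∈ G.neighborFinset i, (x i + x j)
  map_add' x y := by
    ext i
    simp only [PiLp.add_apply, ← Finset.sum_add_distrib]
    exact Finset.sum_congr rfl fun _ _ => add_add_add_comm _ _ _ _
  map_smul' c x := by
    ext i
    simp only [PiLp.smul_apply, ← smul_add, ← Finset.smul_sum, RingHom.id_apply]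

variable {G E}

@[simp]
theorem lapOp_apply (x : PiLp 2 fun _ : V => E) (i : V) :
    G.lapOp E x i = ∑ j ∈ G.neighborFinset i, (x i - x j) := rfl

@[simp]
theorem signlessLapOp_apply (x : PiLp 2 fun _ : V => E) (i : V) :
    G.signlessLapOp E x i = ∑ j ∈ G.neighborFinset i, (x i + x j) := rfl

theorem two_mul_inner_lapOp (x y : PiLp 2 fun _ : V => E) :
    2 * ⟪G.lapOp E x, y⟫ = ∑ i, ∑ j ∈ G.neighborFinset i, ⟪x i - x j, y i - y j⟫ := by
  have hswap : ∑ i, ∑ j ∈ G.neighborFinset i, ⟪x i - x j, y j⟫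
      = -∑ i, ∑ j ∈ G.neighborFinset i, ⟪x i - x j, y i⟫ := by
    rw [G.sum_sum_neighborFinset_comm]
    simp only [← Finset.sum_neg_distrib, ← inner_neg_left, neg_sub]
  have hL : ⟪G.lapOp E x, y⟫ = ∑ i, ∑ j ∈ G.neighborFinset i, ⟪x i - x j, y i⟫ := by
    simp only [PiLp.inner_apply, lapOp_apply, sum_inner]
  simp only [hL, inner_sub_right, Finset.sum_sub_distrib, hswap]
  ring

theorem two_mul_inner_signlessLapOp (x y : PiLp 2 fun _ : V => E) :
    2 * ⟪G.signlessLapOp E x, y⟫ = ∑ i, ∑ j ∈ G.neighborFinset i, ⟪x i + x j, y i + y j⟫ := by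
  have hswap : ∑ i, ∑ j ∈ G.neighborFinset i, ⟪x i + x j, y j⟫
      = ∑ i, ∑ j ∈ G.neighborFinset i, ⟪x i + x j, y i⟫ := by
    rw [G.sum_sum_neighborFinset_comm]
    exact Finset.sum_congr rfl fun i _ => Finset.sum_congr rfl fun j _ => by rw [add_comm]
  have hW : ⟪G.signlessLapOp E x, y⟫ = ∑ i, ∑ j ∈ G.neighborFinset i, ⟪x i + x j, y i⟫ := by
    simp only [PiLp.inner_apply, signlessLapOp_apply, sum_inner]
  simp only [hW, inner_add_right, Finset.sum_add_distrib, hswap]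
  ring

theorem isPositive_lapOp : (G.lapOp E).IsPositive := by
  refine (LinearMap.isPositive_iff _).2 ⟨fun x y => ?_, fun x => ?_⟩
  · have h₁ := two_mul_inner_lapOp (G := G) x y
    have h₂ := two_mul_inner_lapOp (G := G) y x
    have h₃ : ∑ i, ∑ j ∈ G.neighborFinset i, ⟪y i - y j, x i - x j⟫
        = ∑ i, ∑ j ∈ G.neighborFinset i, ⟪x i - x j, y i - y j⟫ :=
      Finset.sum_congr rfl fun _ _ => Finset.sum_congr rfl fun _ _ => real_inner_comm _ _
    rw [real_inner_comm (G.lapOp E y)]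
    linarith
  · have := two_mul_inner_lapOp (G := G) x x
    have : 0 ≤ ∑ i, ∑ j ∈ G.neighborFinset i, ⟪x i - x j, x i - x j⟫ :=
      Finset.sum_nonneg fun _ _ => Finset.sum_nonneg fun _ _ => real_inner_self_nonneg
    linarith

theorem isPositive_signlessLapOp : (G.signlessLapOp E).IsPositive := by
  refine (LinearMap.isPositive_iff _).2 ⟨fun x y => ?_, fun x => ?_⟩
  · have h₁ := two_mul_inner_signlessLapOp (G := G) x y
    have h₂ := two_mul_inner_signlessLapOp (G := G) y x
    have h₃ : ∑ i, ∑ j ∈ G.neighborFinset i, ⟪y i + y j, x i + x j⟫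
        = ∑ i, ∑ j ∈ G.neighborFinset i, ⟪x i + x j, y i + y j⟫ :=
      Finset.sum_congr rfl fun _ _ => Finset.sum_congr rfl fun _ _ => real_inner_comm _ _
    rw [real_inner_comm (G.signlessLapOp E y)]
    linarith
  · have := two_mul_inner_signlessLapOp (G := G) x x
    have : 0 ≤ ∑ i, ∑ j ∈ G.neighborFinset i, ⟪x i + x j, x i + x j⟫ :=
      Finset.sum_nonneg fun _ _ => Finset.sum_nonneg fun _ _ => real_inner_self_nonneg
    linarith

theorem two_mul_norm_sq_le_inner_lapOp_add_inner_signlessLapOp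
    (hG : ∀ i, (G.neighborFinset i).Nonempty) (x : PiLp 2 fun _ : V => E) :
    2 * ‖x‖ ^ 2 ≤ ⟪G.lapOp E x, x⟫ + ⟪G.signlessLapOp E x, x⟫ := by
  have hsum : ∀ i, G.lapOp E x i + G.signlessLapOp E x i = (2 * G.degree i : ℝ) • x i := by
    intro i
    calc G.lapOp E x i + G.signlessLapOp E x i = ∑ _j ∈ G.neighborFinset i, (2 : ℝ) • x i := by
          rw [lapOp_apply, signlessLapOp_apply, ← Finset.sum_add_distrib]
          exact Finset.sum_congr rfl fun _ _ => by rw [two_smul]; abel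
      _ = _ := by
          rw [Finset.sum_const, card_neighborFinset_eq_degree, ← Nat.cast_smul_eq_nsmul ℝ,
            smul_smul, mul_comm]
  rw [← inner_add_left, PiLp.inner_apply, PiLp.norm_sq_eq_of_L2, Finset.mul_sum]
  refine Finset.sum_le_sum fun i _ => ?_
  rw [PiLp.add_apply, hsum, real_inner_smul_left, real_inner_self_eq_norm_sq]
  have : (1 : ℝ) ≤ G.degree i := by
    exact_mod_cast (G.card_neighborFinset_eq_degree i ▸ (hG i).card_pos)
  nlinarith [sq_nonneg ‖x i‖]

theorem lapOp_eq_zero_iff (hG : G.Connected) {x : PiLp 2 fun _ : V => E} :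
    G.lapOp E x = 0 ↔ ∀ i j, x i = x j := by
  refine ⟨fun hx => ?_, fun hx => ?_⟩
  · have hsq := two_mul_inner_lapOp (G := G) x x
    rw [hx, inner_zero_left, mul_zero, eq_comm, Finset.sum_eq_zero_iff_of_nonneg
      fun _ _ => Finset.sum_nonneg fun _ _ => real_inner_self_nonneg] at hsq
    have hadj : ∀ i j, G.Adj i j → x i = x j := fun i j hij => by
      have := (Finset.sum_eq_zero_iff_of_nonneg fun _ _ => real_inner_self_nonneg).1
        (hsq i (Finset.mem_univ i)) j ((G.mem_neighborFinset i j).2 hij)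
      rwa [inner_self_eq_zero, sub_eq_zero] at this
    intro i j
    obtain ⟨w⟩ := hG.preconnected i j
    induction w with
    | nil => rfl
    | cons hA _ ih => exact (hadj _ _ hA).trans ih
  · ext i
    rw [lapOp_apply, PiLp.zero_apply]
    exact Finset.sum_eq_zero fun j _ => by rw [hx i j, sub_self]

end SimpleGraph

section DecentralizedADMM

open SimpleGraph

variable {V : Type*} [Fintype V] {G : SimpleGraph V} [DecidableRel G.Adj]
  {E : Type*} [NormedAddCommGroup E] [InnerProductSpace ℝ E]
  {f : V → E → ℝ} {c : ℝ} {s v : ℕ → V → E}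

structure IsDecentralizedADMM (G : SimpleGraph V) [DecidableRel G.Adj] (f : V → E → ℝ) (c : ℝ)
    (s v : ℕ → V → E) : Prop where
  multiplier_zero : ∀ i, v 0 i = 0
  multiplier_succ : ∀ k i,
    v (k + 1) i = v k i + c • ∑ j ∈ G.neighborFinset i, (s (k + 1) i - s (k + 1) j)
  primal_isMin : ∀ k i w,
    f i (s (k + 1) i) + ⟪v k i, s (k + 1) i⟫
        + c * ∑ j ∈ G.neighborFinset i, ‖s (k + 1) i - (2⁻¹ : ℝ) • (s k i + s k j)‖ ^ 2
      ≤ f i w + ⟪v k i, w⟫ + c * ∑ j ∈ G.neighborFinset i, ‖w - (2⁻¹ : ℝ) • (s k i + s k j)‖ ^ 2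

theorem convexOn_sum_apply (hf : ∀ i, ConvexOn ℝ univ (f i)) :
    ConvexOn ℝ univ fun x : PiLp 2 (fun _ : V => E) => ∑ i, f i (x i) := by
  refine ⟨convex_univ, fun x _ y _ a b ha hb hab => ?_⟩
  simpa [Finset.sum_add_distrib, Finset.mul_sum] using
    Finset.sum_le_sum fun i _ => (hf i).2 (mem_univ (x i)) (mem_univ (y i)) ha hb hab

namespace IsDecentralizedADMM

variable (h : IsDecentralizedADMM G f c s v)
include h

theorem multiplier_eq (k : ℕ) :
    WithLp.toLp 2 (v k) = c • G.lapOp E (∑ t ∈ Finset.range k, WithLp.toLp 2 (s (t + 1))) := by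
  induction k with
  | zero =>
    ext i
    simp [h.multiplier_zero i]
  | succ k ih =>
    rw [Finset.sum_range_succ, map_add, smul_add, ← ih]
    ext i
    simp [h.multiplier_succ k i]

theorem isPrimalDualIteration (hf : ∀ i, ConvexOn ℝ univ (f i)) :
    IsPrimalDualIteration (fun x : PiLp 2 (fun _ : V => E) => ∑ i, f i (x i))
      (c • G.lapOp E) (c • G.signlessLapOp E) (fun k => WithLp.toLp 2 (s k))
      (fun k => ∑ t ∈ Finset.range k, WithLp.toLp 2 (s (t + 1))) where
  R_succ k := Finset.sum_range_succ _ _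
  optimality k w := by
    have hgrad : ∀ i, v k i + c • ∑ j ∈ G.neighborFinset i,
          (2 : ℝ) • (s (k + 1) i - (2⁻¹ : ℝ) • (s k i + s k j))
        = ((c • G.lapOp E) (∑ t ∈ Finset.range (k + 1), WithLp.toLp 2 (s (t + 1)))
          + (c • G.signlessLapOp E) (WithLp.toLp 2 (s (k + 1)) - WithLp.toLp 2 (s k))) i := by
      intro i
      rw [PiLp.add_apply, LinearMap.smul_apply, ← h.multiplier_eq, LinearMap.smul_apply,
        PiLp.smul_apply, signlessLapOp_apply, WithLp.ofLp_toLp, h.multiplier_succ,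
        add_assoc, ← smul_add, ← Finset.sum_add_distrib]
      congr 2
      refine Finset.sum_congr rfl fun j _ => ?_
      simp only [PiLp.sub_apply]
      module
    rw [PiLp.inner_apply, ← Finset.sum_add_distrib]
    refine Finset.sum_le_sum fun i _ => ?_
    rw [← hgrad]
    exact (hf i).le_add_inner_of_isMinOn_add_inner_add_sum_norm_sq _
      (fun y _ => h.primal_isMin k i y) (w i)

theorem exists_tendsto [FiniteDimensional ℝ E] (hG : G.Connected)
    (hdeg : ∀ i, (G.neighborFinset i).Nonempty) (hf : ∀ i, ConvexOn ℝ univ (f i))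
    (hmin : ∃ s₀, ∀ w, ∑ i, f i s₀ ≤ ∑ i, f i w) (hc : 0 < c) :
    ∃ s' : E, (∀ w, ∑ i, f i s' ≤ ∑ i, f i w) ∧ (∀ i, Tendsto (fun k => s k i) atTop (𝓝 s')) ∧
      ∀ i, ∃ v' : E, Tendsto (fun k => v k i) atTop (𝓝 v') := by
  obtain ⟨i₀⟩ := hG.nonempty
  have hker : ∀ x : PiLp 2 (fun _ : V => E), (c • G.lapOp E) x = 0 ↔ ∀ i j, x i = x j :=
    fun x => by rw [LinearMap.smul_apply, smul_eq_zero_iff_right hc.ne', lapOp_eq_zero_iff hG]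
  have hconst : ∀ x : PiLp 2 (fun _ : V => E), (c • G.lapOp E) x = 0 →
      ∑ i, f i (x i) = ∑ i, f i (x i₀) :=
    fun x hx => Finset.sum_congr rfl fun i _ => by rw [(hker x).1 hx i i₀]
  obtain ⟨s₀, hs₀⟩ := hmin
  obtain ⟨x', u', hxu, hS, hR⟩ := (h.isPrimalDualIteration hf).exists_isKKTPair_tendsto
    (isPositive_lapOp.smul_of_nonneg hc.le) (isPositive_signlessLapOp.smul_of_nonneg hc.le)
    (by positivity : 0 < 2 * c)
    (fun y => by
      have := two_mul_norm_sq_le_inner_lapOp_add_inner_signlessLapOp hdeg y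
      simp only [LinearMap.smul_apply, real_inner_smul_left]
      nlinarith)
    (convexOn_sum_apply hf)
    ⟨WithLp.toLp 2 fun _ => s₀, (hker (WithLp.toLp 2 fun _ => s₀)).2 fun _ _ => rfl,
      fun y hy => (hs₀ (y i₀)).trans_eq (hconst y hy).symm⟩
  have hxmin := hxu.isMinOn (isPositive_lapOp.smul_of_nonneg hc.le).isSymmetric
  refine ⟨x' i₀, fun w => ?_, fun i => ?_, fun i => ⟨(c • G.lapOp E) u' i, ?_⟩⟩
  · have := isMinOn_iff.1 hxmin (WithLp.toLp 2 fun _ => w)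
      ((hker (WithLp.toLp 2 fun _ => w)).2 fun _ _ => rfl)
    rwa [hconst x' hxu.1] at this
  · rw [← (hker x').1 hxu.1 i i₀]
    exact ((PiLp.continuous_apply 2 _ i).tendsto x').comp hS
  · have hv : ∀ k, (c • G.lapOp E) (∑ t ∈ Finset.range k, WithLp.toLp 2 (s (t + 1))) i = v k i :=
      fun k => by rw [LinearMap.smul_apply, ← h.multiplier_eq]
    exact (((PiLp.continuous_apply 2 _ i).tendsto _).comp hR).congr hv

end IsDecentralizedADMM

end DecentralizedADMM

theorem decentralized_admm_convergence_general
    (n p : ℕ)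
    (G : SimpleGraph (Fin n)) (hG : G.Connected)
    [DecidableRel G.Adj]
    (hNbr : ∀ i : Fin n, (G.neighborFinset i).Nonempty)
    (f : Fin n → EuclideanSpace ℝ (Fin p) → ℝ)
    (hconv : ∀ i, ConvexOn ℝ Set.univ (f i))
    (hmin : ∃ s₀ : EuclideanSpace ℝ (Fin p), ∀ w, ∑ i, f i s₀ ≤ ∑ i, f i w)
    (c : ℝ) (hc : 0 < c)
    (s : ℕ → Fin n → EuclideanSpace ℝ (Fin p))
    (v : ℕ → Fin n → EuclideanSpace ℝ (Fin p))
    -- initialization of the multipliers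
    (hv0 : ∀ i, v 0 i = 0)
    -- multiplier update: v_i(k) = v_i(k-1) + c ∑_{j ∈ N_i} (s_i(k) - s_j(k)) for k ≥ 1
    (hv : ∀ k : ℕ, ∀ i : Fin n,
      v (k + 1) i = v k i + c • ∑ j ∈ G.neighborFinset i, (s (k + 1) i - s (k + 1) j))
    -- primal update: s_i(k+1) minimizes
    -- f_i(s) + v_i(k)ᵀ s + c ∑_{j ∈ N_i} ‖s - (s_i(k)+s_j(k))/2‖²
    (hs : ∀ k : ℕ, ∀ i : Fin n, ∀ w : EuclideanSpace ℝ (Fin p),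
      f i (s (k + 1) i) + (inner ℝ (v k i) (s (k + 1) i) : ℝ)
        + c * ∑ j ∈ G.neighborFinset i,
            ‖s (k + 1) i - (2⁻¹ : ℝ) • (s k i + s k j)‖ ^ 2
      ≤ f i w + (inner ℝ (v k i) w : ℝ)
        + c * ∑ j ∈ G.neighborFinset i,
            ‖w - (2⁻¹ : ℝ) • (s k i + s k j)‖ ^ 2) :
    ∃ shat : EuclideanSpace ℝ (Fin p),
      (∀ w, ∑ i, f i shat ≤ ∑ i, f i w) ∧
      (∀ i, Tendsto (fun k => s k i) atTop (𝓝 shat)) ∧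
      (∀ i, ∃ vlim : EuclideanSpace ℝ (Fin p),
        Tendsto (fun k => v k i) atTop (𝓝 vlim)) :=
  (⟨hv0, hv, hs⟩ : IsDecentralizedADMM G f c s v).exists_tendsto hG hNbr hconv hmin hc

/-- Convergence of decentralized ADMM: if the local costs `f i` are convex and the
aggregate cost `s ↦ ∑ i, f i s` has a minimizer, then for any penalty `c > 0` the
primal iterates `s k i` converge to a common minimizer `ŝ` of the aggregate cost,
and the multiplier iterates `v k i` converge as well. -/
theorem decentralized_admm_convergence
    (n p : ℕ) (hn : 2 ≤ n)
    (G : SimpleGraph (Fin n)) (hG : G.Connected)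
    [DecidableRel G.Adj]
    (hNbr : ∀ i : Fin n, (G.neighborFinset i).Nonempty)
    (f : Fin n → EuclideanSpace ℝ (Fin p) → ℝ)
    (hconv : ∀ i, ConvexOn ℝ Set.univ (f i))
    (hmin : ∃ s₀ : EuclideanSpace ℝ (Fin p), ∀ w, ∑ i, f i s₀ ≤ ∑ i, f i w)
    (c : ℝ) (hc : 0 < c)
    (s : ℕ → Fin n → EuclideanSpace ℝ (Fin p))
    (v : ℕ → Fin n → EuclideanSpace ℝ (Fin p))
    -- initialization of the multipliers
    (hv0 : ∀ i, v 0 i = 0)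
    -- multiplier update: v_i(k) = v_i(k-1) + c ∑_{j ∈ N_i} (s_i(k) - s_j(k)) for k ≥ 1
    (hv : ∀ k : ℕ, ∀ i : Fin n,
      v (k + 1) i = v k i + c • ∑ j ∈ G.neighborFinset i, (s (k + 1) i - s (k + 1) j))
    -- primal update: s_i(k+1) minimizes
    -- f_i(s) + v_i(k)ᵀ s + c ∑_{j ∈ N_i} ‖s - (s_i(k)+s_j(k))/2‖²
    (hs : ∀ k : ℕ, ∀ i : Fin n, ∀ w : EuclideanSpace ℝ (Fin p),
      f i (s (k + 1) i) + (inner ℝ (v k i) (s (k + 1) i) : ℝ)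
        + c * ∑ j ∈ G.neighborFinset i,
            ‖s (k + 1) i - (2⁻¹ : ℝ) • (s k i + s k j)‖ ^ 2
      ≤ f i w + (inner ℝ (v k i) w : ℝ)
        + c * ∑ j ∈ G.neighborFinset i,
            ‖w - (2⁻¹ : ℝ) • (s k i + s k j)‖ ^ 2) :
    ∃ shat : EuclideanSpace ℝ (Fin p),
      (∀ w, ∑ i, f i shat ≤ ∑ i, f i w) ∧
      (∀ i, Tendsto (fun k => s k i) atTop (𝓝 shat)) ∧
      (∀ i, ∃ vlim : EuclideanSpace ℝ (Fin p),
        Tendsto (fun k => v k i) atTop (𝓝 vlim)) :=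
  decentralized_admm_convergence_general n p G hG hNbr f hconv hmin c hc s v hv0 hv hs
end

section
/- Let H ∈ ℝ^{d×d} be symmetric positive semidefinite and write ‖x‖_H² := xᵀ H x for x ∈ ℝ^d. Let u : ℕ → ℝ^d and u* ∈ ℝ^d satisfy, for all k ≥ 0: (i) ‖u(k+1) − u*‖_H² ≤ ‖u(k) − u*‖_H² − ‖u(k+1) − u(k)‖_H² (monotone contraction toward u*), and (ii) ‖u(k+2) − u(k+1)‖_H² ≤ ‖u(k+1) − u(k)‖_H² (non-increasing successive differences). Then for every k ≥ 0, ‖u(k+1) − u(k)‖_H² ≤ (1/(k+1)) ‖u(0) − u*‖_H², i.e., the successive differences vanish at a non-ergodic O(1/k) rate. -/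
/-! With `a k = ‖u k - u*‖_H²` and `e k = ‖u (k + 1) - u k‖_H²`, the contraction telescopes
to `∑_{i ≤ k} e i ≤ a 0 - a (k + 1) ≤ a 0`, and since `e` is non-increasing the sum is at least
`(k + 1) e k`. -/

open Matrix Finset

/-- The squared seminorm induced by a positive semidefinite matrix `H`:
`‖x‖_H² = xᵀ H x`. -/
def hNormSq {d : ℕ} (H : Matrix (Fin d) (Fin d) ℝ) (x : Fin d → ℝ) : ℝ :=
  x ⬝ᵥ H.mulVec x

lemma hNormSq_nonneg {d : ℕ} {H : Matrix (Fin d) (Fin d) ℝ} (hH : H.PosSemidef)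
    (x : Fin d → ℝ) : 0 ≤ hNormSq H x := by
  simpa [hNormSq, dotProduct_mulVec] using hH.dotProduct_mulVec_nonneg x

lemma sum_range_le_sub_of_le_sub {a e : ℕ → ℝ} (h : ∀ k, a (k + 1) ≤ a k - e k) (n : ℕ) :
    ∑ i ∈ range n, e i ≤ a 0 - a n := by
  induction n with
  | zero => simp
  | succ n ih => rw [sum_range_succ]; linarith [h n]

lemma succ_mul_le_of_antitone_of_le_sub {a e : ℕ → ℝ} (ha : ∀ k, 0 ≤ a k) (he : Antitone e)
    (h : ∀ k, a (k + 1) ≤ a k - e k) (k : ℕ) :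
    (k + 1 : ℝ) * e k ≤ a 0 :=
  calc (k + 1 : ℝ) * e k = ∑ _i ∈ range (k + 1), e k := by simp
    _ ≤ ∑ i ∈ range (k + 1), e i :=
      sum_le_sum fun i hi => he (Nat.lt_succ_iff.mp (mem_range.mp hi))
    _ ≤ a 0 - a (k + 1) := sum_range_le_sub_of_le_sub h (k + 1)
    _ ≤ a 0 := sub_le_self _ (ha _)

/-- Non-ergodic O(1/k) rate: if `‖u(k+1) - u*‖_H² ≤ ‖u(k) - u*‖_H² - ‖u(k+1) - u(k)‖_H²`
and the successive differences `‖u(k+1) - u(k)‖_H²` are non-increasing, then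
`‖u(k+1) - u(k)‖_H² ≤ (1/(k+1)) ‖u(0) - u*‖_H²` for every `k`. -/
theorem admm_nonergodic_rate
    (d : ℕ) (H : Matrix (Fin d) (Fin d) ℝ) (hH : H.PosSemidef)
    (u : ℕ → Fin d → ℝ) (ustar : Fin d → ℝ)
    (hcontr : ∀ k : ℕ,
      hNormSq H (u (k + 1) - ustar)
        ≤ hNormSq H (u k - ustar) - hNormSq H (u (k + 1) - u k))
    (hmono : ∀ k : ℕ,
      hNormSq H (u (k + 2) - u (k + 1)) ≤ hNormSq H (u (k + 1) - u k)) :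
    ∀ k : ℕ,
      hNormSq H (u (k + 1) - u k) ≤ (1 / (k + 1 : ℝ)) * hNormSq H (u 0 - ustar) := by
  intro k
  have hrate := succ_mul_le_of_antitone_of_le_sub (fun k => hNormSq_nonneg hH (u k - ustar))
    (antitone_nat_of_succ_le hmono) hcontr k
  rw [one_div_mul_eq_div, le_div_iff₀ (by positivity), mul_comm]
  exact hrate
end

section
/- Let m, M, γ, Γ be positive reals (representing the strong convexity constant m = m_f and gradient Lipschitz constant M = M_f of the aggregate cost, and the smallest nonzero eigenvalue γ = γ_o of the oriented Laplacian and largest eigenvalue Γ = Γ_u of the unoriented Laplacian). For μ > 1 and c > 0 define F(μ, c) := min { (μ−1)γ/(μΓ), 2 c m γ/(c² Γ γ + μ M²) }. Let μ* > 1 be defined by 1/√μ* = √( (m²/(4M²))(Γ/γ) + 1 ) − (m/(2M))√(Γ/γ), and let c* := M √(μ*/(Γ γ)). Then F(μ*, c*) = (m/M)·( √( m²/(4M²) + γ/Γ ) − m/(2M) ), and for all μ > 1 and c > 0, F(μ, c) ≤ (m/M)·( √( m²/(4M²) + γ/Γ ) − m/(2M) ); that is, the choices μ*, c* maximize the contraction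 parameter δ = F(μ,c) and the maximal value is δ = (m/M)[ √( m²/(4M²) + γ/Γ ) − m/(2M) ]. -/
/-!
The first term of `F` increases with `μ`, and by AM–GM in `c` the second is at most
`(m/M) √(γ/Γ) / √μ`, with equality at `c = M √(μ/(Γγ))`; this bound decreases with `μ`.
Hence the maximum of `F` sits where the two curves cross. In `x = 1/√μ` the crossing equation
`(1 - x²) γ/Γ = (m/M) √(γ/Γ) x` reads `x² + 2tx = 1` with `t = (m/(2M)) √(Γ/γ)`, whose positive
root `√(t² + 1) - t` is exactly the definition of `μ*`.
-/

open Real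

lemma min_le_of_monotoneOn_of_antitoneOn {α β : Type*} [LinearOrder α] [LinearOrder β]
    {f g : α → β} {s : Set α} (hf : MonotoneOn f s) (hg : AntitoneOn g s) {a x : α}
    (ha : a ∈ s) (hx : x ∈ s) (hfg : f a = g a) : min (f x) (g x) ≤ f a := by
  rcases le_total x a with hxa | hax
  · exact (min_le_left _ _).trans (hf hx ha hxa)
  · exact (min_le_right _ _).trans (hfg ▸ hg ha hx hax)

lemma monotoneOn_sub_one_mul_div_mul {γ Γ : ℝ} (hγ : 0 ≤ γ) (hΓ : 0 ≤ Γ) :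
    MonotoneOn (fun μ => (μ - 1) * γ / (μ * Γ)) (Set.Ioi 0) := by
  have key : ∀ μ : ℝ, μ ≠ 0 → (μ - 1) * γ / (μ * Γ) = (1 - μ⁻¹) * (γ / Γ) := by
    intro μ hμ
    rw [mul_div_mul_comm, sub_div, div_self hμ, one_div]
  intro μ (hμ : 0 < μ) ν (hν : 0 < ν) hle
  simp only [key μ hμ.ne', key ν hν.ne']
  gcongr

lemma antitoneOn_div_sqrt {k : ℝ} (hk : 0 ≤ k) : AntitoneOn (fun μ => k / √μ) (Set.Ioi 0) := by
  intro μ (hμ : 0 < μ) ν _ hle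
  dsimp only
  gcongr

lemma two_mul_mul_div_sq_mul_add_le {m M γ Γ μ : ℝ} (hm : 0 ≤ m) (hM : 0 < M) (hγ : 0 ≤ γ)
    (hΓ : 0 < Γ) (hμ : 0 < μ) (c : ℝ) :
    2 * c * m * γ / (c ^ 2 * Γ * γ + μ * M ^ 2) ≤ m / M * √(γ / Γ) / √μ := by
  have hγs : γ = √(γ / Γ) ^ 2 * Γ := by rw [sq_sqrt (by positivity)]; field_simp
  have hμp : μ = √μ ^ 2 := (sq_sqrt hμ.le).symm
  have hs : 0 ≤ √(γ / Γ) := sqrt_nonneg _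
  have hp : 0 < √μ := sqrt_pos.2 hμ
  generalize √(γ / Γ) = s at *
  generalize √μ = p at *
  subst hγs hμp
  rw [div_le_iff₀ (by positivity)]
  calc 2 * c * m * (s ^ 2 * Γ)
      ≤ 2 * c * m * (s ^ 2 * Γ) + m * s / (M * p) * (c * Γ * s - M * p) ^ 2 :=
        le_add_of_nonneg_right (by positivity)
    _ = _ := by field_simp; ring

lemma two_mul_mul_div_sq_mul_add_eq {m M γ Γ μ : ℝ} (hM : 0 < M) (hγ : 0 < γ)
    (hΓ : 0 < Γ) (hμ : 0 < μ) :
    2 * (M * √(μ / (Γ * γ))) * m * γ / ((M * √(μ / (Γ * γ))) ^ 2 * Γ * γ + μ * M ^ 2)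
      = m / M * √(γ / Γ) / √μ := by
  have hγs : γ = √(γ / Γ) ^ 2 * Γ := by rw [sq_sqrt (by positivity)]; field_simp
  have hμp : μ = √μ ^ 2 := (sq_sqrt hμ.le).symm
  have hs : 0 < √(γ / Γ) := by positivity
  have hp : 0 < √μ := sqrt_pos.2 hμ
  rw [sqrt_div' _ (by positivity)]
  generalize √(γ / Γ) = s at *
  generalize √μ = p at *
  subst hγs hμp
  rw [show Γ * (s ^ 2 * Γ) = (Γ * s) ^ 2 by ring, sqrt_sq (by positivity)]
  field_simp
  ring

lemma mul_add_two_mul_eq_one_of_eq_sqrt_sub {x t : ℝ} (hx : x = √(t ^ 2 + 1) - t) :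
    x * (x + 2 * t) = 1 := by
  have h := sq_sqrt (by positivity : 0 ≤ t ^ 2 + 1)
  rw [hx]
  linear_combination h

lemma sub_one_mul_div_mul_eq_of_inv_sqrt_eq {m M γ Γ μ : ℝ} (hγ : 0 < γ) (hΓ : 0 < Γ)
    (hμ : 0 < μ) (h : 1 / √μ = √(m ^ 2 / (4 * M ^ 2) * (Γ / γ) + 1) - m / (2 * M) * √(Γ / γ)) :
    (μ - 1) * γ / (μ * Γ) = m / M * √(γ / Γ) / √μ := by
  have ht : m ^ 2 / (4 * M ^ 2) * (Γ / γ) = (m / (2 * M) * √(Γ / γ)) ^ 2 := by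
    rw [mul_pow, sq_sqrt (by positivity)]; ring
  rw [ht] at h
  have hroot := mul_add_two_mul_eq_one_of_eq_sqrt_sub h
  have hinv : √(Γ / γ) = (√(γ / Γ))⁻¹ := by rw [← sqrt_inv, inv_div]
  have hγs : γ = √(γ / Γ) ^ 2 * Γ := by rw [sq_sqrt (by positivity)]; field_simp
  have hμp : μ = √μ ^ 2 := (sq_sqrt hμ.le).symm
  have hs : 0 < √(γ / Γ) := by positivity
  have hp : 0 < √μ := sqrt_pos.2 hμ
  rw [hinv] at hroot
  generalize √(γ / Γ) = s at *
  generalize √μ = p at *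
  subst hγs hμp
  field_simp at hroot ⊢
  linear_combination (-1) * hroot

lemma div_sqrt_eq_of_inv_sqrt_eq {m M γ Γ μ : ℝ} (hγ : 0 < γ) (hΓ : 0 < Γ)
    (h : 1 / √μ = √(m ^ 2 / (4 * M ^ 2) * (Γ / γ) + 1) - m / (2 * M) * √(Γ / γ)) :
    m / M * √(γ / Γ) / √μ = m / M * (√(m ^ 2 / (4 * M ^ 2) + γ / Γ) - m / (2 * M)) := by
  have hsplit : √(m ^ 2 / (4 * M ^ 2) + γ / Γ)
      = √(γ / Γ) * √(m ^ 2 / (4 * M ^ 2) * (Γ / γ) + 1) := by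
    rw [← sqrt_mul (by positivity)]
    congr 1
    field_simp
  have hprod : √(γ / Γ) * √(Γ / γ) = 1 := by
    rw [← sqrt_mul (by positivity), div_mul_div_comm, mul_comm γ Γ,
      div_self (by positivity), sqrt_one]
  rw [show m / M * √(γ / Γ) / √μ = m / M * √(γ / Γ) * (1 / √μ) by ring, h, hsplit]
  linear_combination (-(m / M * (m / (2 * M)))) * hprod

/-- Optimal tuning of the ADMM contraction parameter: with
`F(μ, c) = min { (μ-1)γ/(μΓ), 2cmγ/(c²Γγ + μM²) }`, the choices
`μ*` (defined by `1/√μ* = √((m²/(4M²))(Γ/γ) + 1) - (m/(2M))√(Γ/γ)`) and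
`c* = M √(μ*/(Γγ))` maximize `F` over `μ > 1`, `c > 0`, and the maximum is
`δ = (m/M)(√(m²/(4M²) + γ/Γ) - m/(2M))`. -/
theorem admm_optimal_contraction_parameter
    (m M γ Γ : ℝ) (hm : 0 < m) (hM : 0 < M) (hγ : 0 < γ) (hΓ : 0 < Γ)
    (F : ℝ → ℝ → ℝ)
    (hF : ∀ μ c : ℝ,
      F μ c = min ((μ - 1) * γ / (μ * Γ))
                  (2 * c * m * γ / (c ^ 2 * Γ * γ + μ * M ^ 2)))
    (μstar : ℝ) (hμstar1 : 1 < μstar)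
    (hμstar : 1 / Real.sqrt μstar
      = Real.sqrt ((m ^ 2 / (4 * M ^ 2)) * (Γ / γ) + 1)
        - (m / (2 * M)) * Real.sqrt (Γ / γ))
    (cstar : ℝ) (hcstar : cstar = M * Real.sqrt (μstar / (Γ * γ))) :
    F μstar cstar
      = (m / M) * (Real.sqrt (m ^ 2 / (4 * M ^ 2) + γ / Γ) - m / (2 * M)) ∧
    ∀ μ c : ℝ, 1 < μ → 0 < c →
      F μ c ≤ (m / M) * (Real.sqrt (m ^ 2 / (4 * M ^ 2) + γ / Γ) - m / (2 * M)) := by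
  have hμstar0 : 0 < μstar := one_pos.trans hμstar1
  rw [← div_sqrt_eq_of_inv_sqrt_eq hγ hΓ hμstar]
  have hbalance := sub_one_mul_div_mul_eq_of_inv_sqrt_eq hγ hΓ hμstar0 hμstar
  refine ⟨?_, fun μ c hμ _ => ?_⟩
  · rw [hF, hbalance, hcstar, two_mul_mul_div_sq_mul_add_eq hM hγ hΓ hμstar0, min_self]
  · rw [hF, ← hbalance]
    calc min ((μ - 1) * γ / (μ * Γ)) (2 * c * m * γ / (c ^ 2 * Γ * γ + μ * M ^ 2))
        ≤ min ((μ - 1) * γ / (μ * Γ)) (m / M * √(γ / Γ) / √μ) :=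
          min_le_min_left _ (two_mul_mul_div_sq_mul_add_le hm.le hM hγ.le hΓ (by linarith) c)
      _ ≤ (μstar - 1) * γ / (μstar * Γ) :=
          min_le_of_monotoneOn_of_antitoneOn (monotoneOn_sub_one_mul_div_mul hγ.le hΓ.le)
            (antitoneOn_div_sqrt (by positivity)) hμstar0 (one_pos.trans hμ) hbalance
end

section
/- Let X ∈ ℝ^{L×T} and let ρ ∈ ℕ satisfy rank(X) ≤ ρ. Define the nuclear norm ‖X‖_* as the sum of the singular values of X (equivalently, the trace of the positive semidefinite square root of Xᵀ X). Then ‖X‖_* = min { (1/2)( ‖P‖_F² + ‖Q‖_F² ) : P ∈ ℝ^{L×ρ}, Q ∈ ℝ^{T×ρ}, X = P Qᵀ }, where ‖·‖_F is the Frobenius norm; in particular the minimum is attained, and every factorization X = P Qᵀ satisfies ‖X‖_* ≤ (1/2)( ‖P‖_F² + ‖Q‖_F² ). -/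
open Matrix

/-- The nuclear norm of a real matrix `X`: the sum of its singular values,
i.e. the trace of the positive semidefinite square root of `Xᵀ X`
(over `ℝ`, `Xᴴ = Xᵀ`). -/
noncomputable def nuclearNorm {L T : ℕ} (X : Matrix (Fin L) (Fin T) ℝ) : ℝ :=
  ((Matrix.posSemidef_conjTranspose_mul_self X).1.eigenvectorUnitary.1 *
      diagonal ((RCLike.ofReal : ℝ → ℝ) ∘ Real.sqrt ∘ (Matrix.posSemidef_conjTranspose_mul_self X).1.eigenvalues) *
      (star (Matrix.posSemidef_conjTranspose_mul_self X).1.eigenvectorUnitary : Matrix (Fin T) (Fin T) ℝ)).trace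

/-- Squared Frobenius norm of a matrix. -/
def frobSq {L T : ℕ} (A : Matrix (Fin L) (Fin T) ℝ) : ℝ :=
  ∑ i, ∑ j, (A i j) ^ 2

/-! Write `X = U diag(σ) Vᵀ` with `V` orthogonal and `U = X V diag(σ)⁻¹` a partial isometry.
For any factorization `X = P Qᵀ`,
`‖X‖_* = tr(Uᵀ X V) = ⟨Uᵀ P, Vᵀ Q⟩_F ≤ ½(‖Uᵀ P‖_F² + ‖Vᵀ Q‖_F²) ≤ ½(‖P‖_F² + ‖Q‖_F²)`.
Conversely, only `rank X ≤ ρ` of the `σⱼ` are nonzero, so `diag σ = F Fᵀ` for some `F` with `ρ`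
columns, and `P = U F`, `Q = V F` attain the bound. -/

namespace Matrix

variable {m n k : Type*} [Fintype m]

theorem transpose_mul_self_eq_zero {A : Matrix m n ℝ} : Aᵀ * A = 0 ↔ A = 0 := by
  simpa [conjTranspose_eq_transpose_of_trivial] using conjTranspose_mul_self_eq_zero (A := A)

variable [Fintype n] [Fintype k]

theorem trace_transpose_mul_self_nonneg (A : Matrix m n ℝ) : 0 ≤ (Aᵀ * A).trace := by
  simpa [conjTranspose_eq_transpose_of_trivial] using
    (posSemidef_conjTranspose_mul_self A).trace_nonneg

theorem trace_transpose_mul_le (A B : Matrix m n ℝ) :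
    (Aᵀ * B).trace ≤ 1 / 2 * ((Aᵀ * A).trace + (Bᵀ * B).trace) := by
  have hBA : (Bᵀ * A).trace = (Aᵀ * B).trace := by
    rw [← trace_transpose, transpose_mul, transpose_transpose]
  have h := trace_transpose_mul_self_nonneg (A - B)
  rw [transpose_sub, Matrix.sub_mul, Matrix.mul_sub, Matrix.mul_sub, trace_sub, trace_sub,
    trace_sub, hBA] at h
  linarith

/-- `W Wᵀ` is an orthogonal projection, so `‖Wᵀ P‖_F² = ‖P‖_F² - ‖(1 - W Wᵀ) P‖_F²`. -/
theorem trace_transpose_mul_self_transpose_mul_le [DecidableEq m] {W : Matrix m k ℝ}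
    (hW : W * Wᵀ * W = W) (P : Matrix m n ℝ) : ((Wᵀ * P)ᵀ * (Wᵀ * P)).trace ≤ (Pᵀ * P).trace := by
  set E := W * Wᵀ
  have hE : (1 - E)ᵀ * (1 - E) = 1 - E := by
    have hEE : E * E = E := by rw [← Matrix.mul_assoc, hW]
    have hEt : Eᵀ = E := by simp [E, transpose_mul]
    rw [transpose_sub, transpose_one, hEt, Matrix.sub_mul, Matrix.mul_sub, Matrix.mul_sub, hEE]
    simp
  calc ((Wᵀ * P)ᵀ * (Wᵀ * P)).trace = (Pᵀ * E * P).trace := by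
        simp [E, transpose_mul, Matrix.mul_assoc]
    _ ≤ (Pᵀ * E * P).trace + (((1 - E) * P)ᵀ * ((1 - E) * P)).trace :=
        le_add_of_nonneg_right (trace_transpose_mul_self_nonneg _)
    _ = (Pᵀ * P).trace := by
        rw [← trace_add, transpose_mul, Matrix.mul_assoc Pᵀ (1 - E)ᵀ, ← Matrix.mul_assoc (1 - E)ᵀ,
          hE]
        rw [Matrix.sub_mul, Matrix.one_mul, Matrix.mul_sub, Matrix.mul_assoc]
        abel_nf

theorem exists_mul_transpose_eq_diagonal [DecidableEq n] [DecidableEq k] {s : n → ℝ}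
    (hs : 0 ≤ s) (hcard : Fintype.card {j // s j ≠ 0} ≤ Fintype.card k) :
    ∃ F : Matrix n k ℝ, F * Fᵀ = diagonal s := by
  obtain ⟨f⟩ := Function.Embedding.nonempty_of_card_le hcard
  let row (j : n) : k → ℝ := if h : s j = 0 then 0 else Pi.single (f ⟨j, h⟩) √(s j)
  refine ⟨of row, ?_⟩
  ext j j'
  change row j ⬝ᵥ row j' = diagonal s j j'
  rw [diagonal_apply]
  by_cases hj : s j = 0
  · simp [row, hj]
  by_cases hj' : s j' = 0
  · simp [row, hj', show j ≠ j' by rintro rfl; exact hj hj']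
  simp +contextual [row, hj, hj', Pi.single_apply, f.injective.eq_iff, eq_comm (a := j'),
    Real.mul_self_sqrt (hs j')]

section SingularValueDecomposition

variable [DecidableEq n] (X : Matrix m n ℝ)

noncomputable def rightSingularVectors : Matrix n n ℝ :=
  (posSemidef_conjTranspose_mul_self X).1.eigenvectorUnitary

noncomputable def singularValues (j : n) : ℝ :=
  √((posSemidef_conjTranspose_mul_self X).1.eigenvalues j)

/-- The inverse `(singularValues X)⁻¹` is pointwise with `0⁻¹ = 0`: the columns belonging to
zero singular values are zero, and `leftSingularVectors X` is only a partial isometry. -/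
noncomputable def leftSingularVectors : Matrix m n ℝ :=
  X * rightSingularVectors X * diagonal (singularValues X)⁻¹

theorem singularValues_nonneg : 0 ≤ singularValues X := fun _ => Real.sqrt_nonneg _

theorem rightSingularVectors_transpose_mul_self :
    (rightSingularVectors X)ᵀ * rightSingularVectors X = 1 := by
  simpa [rightSingularVectors, star_eq_conjTranspose, conjTranspose_eq_transpose_of_trivial]
    using Unitary.coe_star_mul_self (posSemidef_conjTranspose_mul_self X).1.eigenvectorUnitary

theorem rightSingularVectors_mul_transpose_self :
    rightSingularVectors X * (rightSingularVectors X)ᵀ = 1 := by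
  simpa [rightSingularVectors, star_eq_conjTranspose, conjTranspose_eq_transpose_of_trivial]
    using Unitary.coe_mul_star_self (posSemidef_conjTranspose_mul_self X).1.eigenvectorUnitary

theorem transpose_mul_self_mul_rightSingularVectors :
    (X * rightSingularVectors X)ᵀ * (X * rightSingularVectors X) =
      diagonal fun j => singularValues X j ^ 2 := by
  have h := (posSemidef_conjTranspose_mul_self X).1.conjStarAlgAut_star_eigenvectorUnitary
  simp only [Unitary.conjStarAlgAut_apply, Unitary.coe_star, star_eq_conjTranspose,
    conjTranspose_eq_transpose_of_trivial] at h
  simp only [singularValues, Real.sq_sqrt (eigenvalues_conjTranspose_mul_self_nonneg X _)]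
  rw [transpose_mul, Matrix.mul_assoc, ← Matrix.mul_assoc Xᵀ, ← Matrix.mul_assoc]
  simp only [rightSingularVectors]
  exact h

/-- The columns of `X V` at zero singular values vanish, since `diag σ²` is their Gram matrix. -/
theorem mul_rightSingularVectors_mul_diagonal_inv_mul :
    X * rightSingularVectors X * diagonal (fun j => (singularValues X j)⁻¹ * singularValues X j) =
      X * rightSingularVectors X := by
  set A := X * rightSingularVectors X
  set c : n → ℝ := fun j => (singularValues X j)⁻¹ * singularValues X j
  have hA : A * diagonal (1 - c) = 0 := by
    rw [← transpose_mul_self_eq_zero, transpose_mul, diagonal_transpose, Matrix.mul_assoc,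
      ← Matrix.mul_assoc Aᵀ, transpose_mul_self_mul_rightSingularVectors, diagonal_mul_diagonal,
      diagonal_mul_diagonal, ← diagonal_zero]
    congr 1
    funext j
    by_cases hj : singularValues X j = 0 <;> simp [c, hj]
  calc A * diagonal c = A * diagonal c + A * diagonal (1 - c) := by rw [hA, add_zero]
    _ = A := by simp [← Matrix.mul_add, diagonal_add]

theorem leftSingularVectors_mul_diagonal :
    leftSingularVectors X * diagonal (singularValues X) = X * rightSingularVectors X := by
  rw [leftSingularVectors, Matrix.mul_assoc, diagonal_mul_diagonal]
  exact mul_rightSingularVectors_mul_diagonal_inv_mul X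

theorem leftSingularVectors_mul_diagonal_mul_transpose :
    leftSingularVectors X * diagonal (singularValues X) * (rightSingularVectors X)ᵀ = X := by
  rw [leftSingularVectors_mul_diagonal, Matrix.mul_assoc, rightSingularVectors_mul_transpose_self,
    Matrix.mul_one]

theorem transpose_leftSingularVectors_mul_mul_rightSingularVectors :
    (leftSingularVectors X)ᵀ * X * rightSingularVectors X = diagonal (singularValues X) := by
  calc (leftSingularVectors X)ᵀ * X * rightSingularVectors X
      = diagonal (singularValues X)⁻¹ *
          ((X * rightSingularVectors X)ᵀ * (X * rightSingularVectors X)) := by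
        simp only [leftSingularVectors, transpose_mul, diagonal_transpose, Matrix.mul_assoc]
    _ = diagonal (singularValues X) := by
        rw [transpose_mul_self_mul_rightSingularVectors, diagonal_mul_diagonal]
        congr 1
        funext j
        simp [sq, ← mul_assoc]

theorem leftSingularVectors_mul_transpose_mul_self :
    leftSingularVectors X * (leftSingularVectors X)ᵀ * leftSingularVectors X =
      leftSingularVectors X := by
  have h : (leftSingularVectors X)ᵀ * leftSingularVectors X =
      diagonal (singularValues X) * diagonal (singularValues X)⁻¹ := by
    nth_rw 2 [leftSingularVectors]
    rw [← Matrix.mul_assoc, ← Matrix.mul_assoc,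
      transpose_leftSingularVectors_mul_mul_rightSingularVectors]
  rw [Matrix.mul_assoc, h, leftSingularVectors, Matrix.mul_assoc, diagonal_mul_diagonal,
    diagonal_mul_diagonal]
  congr 2
  funext j
  by_cases hj : singularValues X j = 0 <;> simp [hj]

theorem card_singularValues_ne_zero : Fintype.card {j // singularValues X j ≠ 0} = X.rank := by
  rw [← rank_conjTranspose_mul_self,
    (posSemidef_conjTranspose_mul_self X).1.rank_eq_card_non_zero_eigs]
  exact Fintype.card_congr <| Equiv.subtypeEquivRight fun j =>
    not_congr (Real.sqrt_eq_zero (eigenvalues_conjTranspose_mul_self_nonneg X j))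

end SingularValueDecomposition

end Matrix

theorem frobSq_eq_trace {m n : ℕ} (A : Matrix (Fin m) (Fin n) ℝ) : frobSq A = (Aᵀ * A).trace := by
  simp only [frobSq, trace, diag, mul_apply, transpose_apply, sq]
  rw [Finset.sum_comm]

theorem nuclearNorm_eq_sum_singularValues {L T : ℕ} (X : Matrix (Fin L) (Fin T) ℝ) :
    nuclearNorm X = ∑ j, X.singularValues j := by
  rw [nuclearNorm, trace_mul_cycle, Unitary.coe_star_mul_self, Matrix.one_mul, trace_diagonal]
  rfl

theorem nuclearNorm_le_of_eq_mul_transpose {L T ρ : ℕ} {X : Matrix (Fin L) (Fin T) ℝ}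
    {P : Matrix (Fin L) (Fin ρ) ℝ} {Q : Matrix (Fin T) (Fin ρ) ℝ} (hX : X = P * Qᵀ) :
    nuclearNorm X ≤ 1 / 2 * (frobSq P + frobSq Q) := by
  set U := X.leftSingularVectors
  set V := X.rightSingularVectors
  have hV : V * Vᵀ * V = V := by rw [X.rightSingularVectors_mul_transpose_self, Matrix.one_mul]
  calc nuclearNorm X = (Uᵀ * X * V).trace := by
        rw [X.transpose_leftSingularVectors_mul_mul_rightSingularVectors, trace_diagonal,
          nuclearNorm_eq_sum_singularValues]
    _ = ((Vᵀ * Q)ᵀ * (Uᵀ * P)).trace := by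
        rw [hX, transpose_mul, transpose_transpose, trace_mul_comm (Qᵀ * V)]
        simp only [Matrix.mul_assoc]
    _ ≤ 1 / 2 * (((Vᵀ * Q)ᵀ * (Vᵀ * Q)).trace + ((Uᵀ * P)ᵀ * (Uᵀ * P)).trace) :=
        trace_transpose_mul_le _ _
    _ ≤ 1 / 2 * (frobSq P + frobSq Q) := by
        rw [frobSq_eq_trace, frobSq_eq_trace]
        linarith [trace_transpose_mul_self_transpose_mul_le hV Q,
          trace_transpose_mul_self_transpose_mul_le X.leftSingularVectors_mul_transpose_mul_self P]

theorem exists_eq_mul_transpose_nuclearNorm_eq {L T ρ : ℕ} {X : Matrix (Fin L) (Fin T) ℝ}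
    (hrank : X.rank ≤ ρ) :
    ∃ (P : Matrix (Fin L) (Fin ρ) ℝ) (Q : Matrix (Fin T) (Fin ρ) ℝ),
      X = P * Qᵀ ∧ nuclearNorm X = 1 / 2 * (frobSq P + frobSq Q) := by
  obtain ⟨F, hF⟩ := exists_mul_transpose_eq_diagonal (k := Fin ρ) X.singularValues_nonneg
    (by rwa [X.card_singularValues_ne_zero, Fintype.card_fin])
  set U := X.leftSingularVectors
  set V := X.rightSingularVectors
  refine ⟨U * F, V * F, ?_, ?_⟩
  · rw [transpose_mul, Matrix.mul_assoc, ← Matrix.mul_assoc F, hF, ← Matrix.mul_assoc,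
      X.leftSingularVectors_mul_diagonal_mul_transpose]
  · have hP : frobSq (U * F) = ∑ j, X.singularValues j := by
      rw [frobSq_eq_trace, transpose_mul, Matrix.mul_assoc, trace_mul_comm, Matrix.mul_assoc,
        Matrix.mul_assoc U, hF, X.leftSingularVectors_mul_diagonal, ← Matrix.mul_assoc,
        X.transpose_leftSingularVectors_mul_mul_rightSingularVectors, trace_diagonal]
    have hQ : frobSq (V * F) = ∑ j, X.singularValues j := by
      rw [frobSq_eq_trace, transpose_mul, Matrix.mul_assoc, ← Matrix.mul_assoc Vᵀ,
        X.rightSingularVectors_transpose_mul_self, Matrix.one_mul, trace_mul_comm, hF,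
        trace_diagonal]
    rw [hP, hQ, nuclearNorm_eq_sum_singularValues]
    ring

/-- Bilinear factorization characterization of the nuclear norm: if
`rank(X) ≤ ρ`, then `‖X‖_* = min { (1/2)(‖P‖_F² + ‖Q‖_F²) : X = P Qᵀ }`, the
minimum being attained; in particular every factorization `X = P Qᵀ` satisfies
`‖X‖_* ≤ (1/2)(‖P‖_F² + ‖Q‖_F²)`. -/
theorem nuclearNorm_eq_min_factorization
    (L T ρ : ℕ) (X : Matrix (Fin L) (Fin T) ℝ) (hrank : X.rank ≤ ρ) :
    IsLeast
      {t : ℝ | ∃ (P : Matrix (Fin L) (Fin ρ) ℝ) (Q : Matrix (Fin T) (Fin ρ) ℝ),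
        X = P * Qᵀ ∧ t = (1 / 2) * (frobSq P + frobSq Q)}
      (nuclearNorm X) := by
  refine ⟨exists_eq_mul_transpose_nuclearNorm_eq hrank, ?_⟩
  rintro t ⟨P, Q, hX, rfl⟩
  exact nuclearNorm_le_of_eq_mul_transpose hX
end
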